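/- arXiv:2104.08576 — 3 statements merged into one kernel-verified Lean document; each statement's English description precedes it below -/
import Mathlib

section
/- Let n ≥ 2, f a Schwartz function on ℝ^{1+n}, and θ ∈ S^{n-1}. Then the Fourier transform in the variable z of Lf(·,θ) satisfies, for every ξ ∈ ℝ^n: ∫_{ℝ^n} e^{-i z·ξ} Lf(z,θ) dz = f̂(-θ·ξ, ξ). In particular, the restriction of Lf to each direction θ determines the Fourier transform of f on the hyperplane { (τ,ξ) : τ = -θ·ξ }, which consists of covectors (τ,ξ) with |τ| ≤ |ξ|. -/
open MeasureTheory Complex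

/-!
Shearing `(s, z) ↦ (s, z + s • θ)` preserves Lebesgue measure on `ℝ × ℝⁿ`, so by Fubini the
integral over `z` of the line integrals `Lf(z, θ)` is the integral of `f` itself. Applied to
`f` multiplied by the plane wave `e^{-i(t τ + x·ξ)}` with `τ = -θ·ξ`, which is constant along
the light rays `s ↦ (s, z + s θ)`, this is the slice identity.
-/

section LightRay

variable {E : Type*} [NormedAddCommGroup E] [NormedSpace ℝ E] [MeasurableSpace E] [BorelSpace E]
  [SecondCountableTopology E] {μ : Measure E} [μ.IsAddRightInvariant] [SFinite μ]

noncomputable def lightRayTransform {G : Type*} [NormedAddCommGroup G] [NormedSpace ℝ G]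
    (f : ℝ × E → G) (z θ : E) : G :=
  ∫ s, f (s, z + s • θ)

theorem measurePreserving_shear (θ : E) :
    MeasurePreserving (fun p : ℝ × E => (p.1, p.2 + p.1 • θ))
      ((volume : Measure ℝ).prod μ) ((volume : Measure ℝ).prod μ) :=
  (MeasurePreserving.id volume).skew_product (measurable_snd.add (measurable_fst.smul_const θ))
    (ae_of_all _ fun s => (measurePreserving_add_right μ (s • θ)).map_eq)

theorem integral_lightRayTransform {G : Type*} [NormedAddCommGroup G] [NormedSpace ℝ G]
    {f : ℝ × E → G} (hf : Integrable f ((volume : Measure ℝ).prod μ)) (θ : E) :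
    ∫ z, lightRayTransform f z θ ∂μ = ∫ p, f p ∂((volume : Measure ℝ).prod μ) := by
  have hshear : Integrable (fun p : ℝ × E => f (p.1, p.2 + p.1 • θ))
      ((volume : Measure ℝ).prod μ) :=
    ((measurePreserving_shear θ).integrable_comp hf.aestronglyMeasurable).2 hf
  calc ∫ z, (∫ s, f (s, z + s • θ)) ∂μ
      = ∫ s, ∫ z, f (s, z + s • θ) ∂μ :=
        integral_integral_swap (f := fun z s => f (s, z + s • θ)) hshear.swap
    _ = ∫ s, ∫ x, f (s, x) ∂μ := by
        congr 1 with s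
        exact integral_add_right_eq_self (fun x => f (s, x)) (s • θ)
    _ = ∫ p, f p ∂((volume : Measure ℝ).prod μ) := (integral_prod f hf).symm

end LightRay

theorem norm_exp_neg_I_mul_ofReal (r : ℝ) : ‖exp (-(I * r))‖ = 1 := by
  simpa [mul_comm] using norm_exp_ofReal_mul_I (-r)

section FourierSlice

variable {E : Type*} [NormedAddCommGroup E] [InnerProductSpace ℝ E]

theorem lightRayTransform_planeWave_mul (f : ℝ × E → ℂ) (z θ ξ : E) :
    lightRayTransform
        (fun p : ℝ × E => exp (-(I * ((p.1 * -(inner ℝ θ ξ) + inner ℝ p.2 ξ : ℝ) : ℂ))) * f p)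
        z θ
      = exp (-(I * (inner ℝ z ξ : ℝ))) * lightRayTransform f z θ := by
  rw [lightRayTransform, lightRayTransform, ← integral_const_mul]
  congr 1 with s
  rw [inner_add_left, real_inner_smul_left]
  ring_nf

variable [MeasurableSpace E] [BorelSpace E] [SecondCountableTopology E] {μ : Measure E}
  [μ.IsAddRightInvariant] [SFinite μ]

theorem integral_planeWave_mul_lightRayTransform {f : ℝ × E → ℂ}
    (hf : Integrable f ((volume : Measure ℝ).prod μ)) (θ ξ : E) :
    ∫ z, exp (-(I * (inner ℝ z ξ : ℝ))) * lightRayTransform f z θ ∂μ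
      = ∫ p, exp (-(I * ((p.1 * -(inner ℝ θ ξ) + inner ℝ p.2 ξ : ℝ) : ℂ))) * f p
          ∂((volume : Measure ℝ).prod μ) := by
  have hwave : Integrable
      (fun p : ℝ × E => exp (-(I * ((p.1 * -(inner ℝ θ ξ) + inner ℝ p.2 ξ : ℝ) : ℂ))) * f p)
      ((volume : Measure ℝ).prod μ) :=
    hf.bdd_mul (by fun_prop) (ae_of_all _ fun _ => (norm_exp_neg_I_mul_ofReal _).le)
  simp_rw [← lightRayTransform_planeWave_mul]
  exact integral_lightRayTransform hwave θ

end FourierSlice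

theorem light_ray_transform_fourier_slice_general
    (n : ℕ)
    (f : SchwartzMap (ℝ × EuclideanSpace ℝ (Fin n)) ℂ)
    (θ : EuclideanSpace ℝ (Fin n)) (hθ : ‖θ‖ = 1) :
    (∀ ξ : EuclideanSpace ℝ (Fin n),
      (∫ z : EuclideanSpace ℝ (Fin n),
          Complex.exp (-(Complex.I * ((inner ℝ z ξ : ℝ) : ℂ)))
            * ∫ s : ℝ, f (s, z + s • θ))
        = ∫ p : ℝ × EuclideanSpace ℝ (Fin n),
            Complex.exp (-(Complex.I * ((p.1 * (-(inner ℝ θ ξ : ℝ)) + (inner ℝ p.2 ξ : ℝ) : ℝ) : ℂ)))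
              * f p) ∧
    (∀ ξ : EuclideanSpace ℝ (Fin n), |(-(inner ℝ θ ξ : ℝ))| ≤ ‖ξ‖) := by
  refine ⟨fun ξ => integral_planeWave_mul_lightRayTransform f.integrable θ ξ, fun ξ => ?_⟩
  simpa [hθ] using abs_real_inner_le_norm θ ξ

/-- Fourier slice theorem for the Minkowski light ray transform: for a
Schwartz function `f` on `ℝ^{1+n}` and `θ ∈ S^{n-1}`, the Fourier transform in `z` of
`Lf(·,θ)` satisfies `∫_{ℝ^n} e^{-i z·ξ} Lf(z,θ) dz = f̂(-θ·ξ, ξ)` for every `ξ`, where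
`f̂(τ,ξ) = ∫ e^{-i(tτ + x·ξ)} f(t,x) dt dx`; moreover the covectors `(-θ·ξ, ξ)` so obtained
satisfy `|τ| ≤ |ξ|`. -/
theorem light_ray_transform_fourier_slice
    (n : ℕ) (hn : 2 ≤ n)
    (f : SchwartzMap (ℝ × EuclideanSpace ℝ (Fin n)) ℂ)
    (θ : EuclideanSpace ℝ (Fin n)) (hθ : ‖θ‖ = 1) :
    (∀ ξ : EuclideanSpace ℝ (Fin n),
      (∫ z : EuclideanSpace ℝ (Fin n),
          Complex.exp (-(Complex.I * ((inner ℝ z ξ : ℝ) : ℂ)))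
            * ∫ s : ℝ, f (s, z + s • θ))
        = ∫ p : ℝ × EuclideanSpace ℝ (Fin n),
            Complex.exp (-(Complex.I * ((p.1 * (-(inner ℝ θ ξ : ℝ)) + (inner ℝ p.2 ξ : ℝ) : ℝ) : ℂ)))
              * f p) ∧
    (∀ ξ : EuclideanSpace ℝ (Fin n), |(-(inner ℝ θ ξ : ℝ))| ≤ ‖ξ‖) :=
  light_ray_transform_fourier_slice_general n f θ hθ
end

section
/- Let n ≥ 3 and define k(s,ξ) = (-s)_+^{(n-3)/2} (s + 2|ξ|)_+^{(n-3)/2} / |ξ|^{n-2} for s ∈ ℝ and ξ ∈ ℝ^n \ {0}. Then: (i) for every C₀ ≥ 1 there is a constant C > 0 such that k(s,ξ) ≤ C |s|^{-1} whenever |s| ≥ 1 and |ξ| ≤ C₀|s|; (ii) k(s,ξ) ≤ 2^{(n-3)/2} (-s)_+^{(n-3)/2} |ξ|^{-(n-1)/2} for all s ∈ ℝ and ξ ≠ 0; in particular, for every C₀ ≥ 1 there is C > 0 such that k(s,ξ) ≤ C |ξ|^{-(n-1)/2} |s|^{(n-3)/2} whenever 0 < |s| ≤ C₀|ξ| and |ξ|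 ≥ 1. (These are the product-type symbol estimates of orders p = -n/2 and l = n/2 - 1 that exhibit the kernel of the normal operator as a paired Lagrangian distribution.) -/
/-- The symbol `k(s,ξ) = (-s)₊^{(n-3)/2}(s + 2|ξ|)₊^{(n-3)/2}/|ξ|^{n-2}` of the normal
operator of the Minkowski light ray transform, in the variables `s = τ - |ξ|` and `ξ`. -/
noncomputable def pairedSymbolMink (n : ℕ) (s : ℝ) (ξ : EuclideanSpace ℝ (Fin n)) : ℝ :=
  ((if 0 < -s then (-s) ^ (((n : ℝ) - 3) / 2) else 0)
      * (if 0 < s + 2 * ‖ξ‖ then (s + 2 * ‖ξ‖) ^ (((n : ℝ) - 3) / 2) else 0))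
    / ‖ξ‖ ^ (n - 2)

lemma paired_core (n : ℕ) (hn : 3 ≤ n) (s : ℝ) (ξ : EuclideanSpace ℝ (Fin n)) (hξ : ξ ≠ 0) :
    pairedSymbolMink n s ξ
      ≤ (2 : ℝ) ^ (((n : ℝ) - 3) / 2)
          * (if 0 < -s then (-s) ^ (((n : ℝ) - 3) / 2) else 0)
          * ‖ξ‖ ^ (-((n : ℝ) - 1) / 2) := by
  have hr : (0 : ℝ) < ‖ξ‖ := norm_pos_iff.mpr hξ
  set r := ‖ξ‖ with hrdef
  set a : ℝ := ((n : ℝ) - 3) / 2 with hadef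
  have ha : 0 ≤ a := by
    have : (3 : ℝ) ≤ (n : ℝ) := by exact_mod_cast hn
    rw [hadef]; linarith
  unfold pairedSymbolMink
  rw [← hrdef, ← hadef]
  by_cases hs : 0 < -s
  · by_cases h2 : 0 < s + 2 * r
    · rw [if_pos hs, if_pos h2]
      have hsum : s + 2 * r ≤ 2 * r := by linarith
      have h1 : (s + 2 * r) ^ a ≤ (2 * r) ^ a :=
        Real.rpow_le_rpow h2.le hsum ha
      have h2r : (2 * r) ^ a = 2 ^ a * r ^ a :=
        Real.mul_rpow (by norm_num) hr.le
      have hpow : (r : ℝ) ^ (n - 2) = r ^ ((n : ℝ) - 2) := by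
        rw [← Real.rpow_natCast r (n - 2)]
        congr 1
        have : ((n - 2 : ℕ) : ℝ) = (n : ℝ) - 2 := by
          have h2n : 2 ≤ n := by omega
          push_cast [Nat.cast_sub h2n]; ring
        exact this
      have hdiv : r ^ a / r ^ ((n : ℝ) - 2) = r ^ (-((n : ℝ) - 1) / 2) := by
        rw [← Real.rpow_sub hr]
        congr 1
        rw [hadef]; ring
      calc (-s) ^ a * (s + 2 * r) ^ a / r ^ (n - 2)
          ≤ (-s) ^ a * (2 ^ a * r ^ a) / r ^ (n - 2) := by
            apply div_le_div_of_nonneg_right ?_ (by positivity)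
            rw [← h2r]
            exact mul_le_mul_of_nonneg_left h1 (Real.rpow_nonneg hs.le a)
        _ = 2 ^ a * (-s) ^ a * (r ^ a / r ^ ((n : ℝ) - 2)) := by
            rw [hpow]; ring
        _ = 2 ^ a * (-s) ^ a * r ^ (-((n : ℝ) - 1) / 2) := by rw [hdiv]
    · rw [if_pos hs, if_neg h2]
      have : 0 ≤ 2 ^ a * (-s) ^ a * r ^ (-((n : ℝ) - 1) / 2) := by positivity
      simpa using this
  · rw [if_neg hs]
    simp

/-- Product-type symbol estimates for
`k(s,ξ) = (-s)₊^{(n-3)/2}(s + 2|ξ|)₊^{(n-3)/2}/|ξ|^{n-2}`, `n ≥ 3`: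
(i) for every `C₀ ≥ 1` there is `C > 0` with `k(s,ξ) ≤ C|s|⁻¹` for `|s| ≥ 1`, `|ξ| ≤ C₀|s|`;
(ii) `k(s,ξ) ≤ 2^{(n-3)/2} (-s)₊^{(n-3)/2} |ξ|^{-(n-1)/2}` always;
(iii) for every `C₀ ≥ 1` there is `C > 0` with `k(s,ξ) ≤ C |ξ|^{-(n-1)/2} |s|^{(n-3)/2}`
for `0 < |s| ≤ C₀|ξ|`, `|ξ| ≥ 1`. -/
theorem paired_symbol_estimates (n : ℕ) (hn : 3 ≤ n) :
    (∀ C₀ : ℝ, 1 ≤ C₀ → ∃ C : ℝ, 0 < C ∧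
      ∀ (s : ℝ) (ξ : EuclideanSpace ℝ (Fin n)), ξ ≠ 0 → 1 ≤ |s| → ‖ξ‖ ≤ C₀ * |s| →
        pairedSymbolMink n s ξ ≤ C * |s|⁻¹) ∧
    (∀ (s : ℝ) (ξ : EuclideanSpace ℝ (Fin n)), ξ ≠ 0 →
      pairedSymbolMink n s ξ
        ≤ (2 : ℝ) ^ (((n : ℝ) - 3) / 2)
            * (if 0 < -s then (-s) ^ (((n : ℝ) - 3) / 2) else 0)
            * ‖ξ‖ ^ (-((n : ℝ) - 1) / 2)) ∧
    (∀ C₀ : ℝ, 1 ≤ C₀ → ∃ C : ℝ, 0 < C ∧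
      ∀ (s : ℝ) (ξ : EuclideanSpace ℝ (Fin n)), ξ ≠ 0 →
        0 < |s| → |s| ≤ C₀ * ‖ξ‖ → 1 ≤ ‖ξ‖ →
        pairedSymbolMink n s ξ
          ≤ C * ‖ξ‖ ^ (-((n : ℝ) - 1) / 2) * |s| ^ (((n : ℝ) - 3) / 2)) := by
  have ha : (0 : ℝ) ≤ ((n : ℝ) - 3) / 2 := by
    have : (3 : ℝ) ≤ (n : ℝ) := by exact_mod_cast hn
    linarith
  refine ⟨?_, fun s ξ hξ => paired_core n hn s ξ hξ, ?_⟩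
  · intro C₀ _
    refine ⟨2 ^ ((n : ℝ) - 2), by positivity, ?_⟩
    intro s ξ hξ hs1 _
    have hr : (0 : ℝ) < ‖ξ‖ := norm_pos_iff.mpr hξ
    by_cases hs : 0 < -s
    · by_cases h2 : 0 < s + 2 * ‖ξ‖
      · -- here |s| = -s < 2‖ξ‖
        have habs : |s| = -s := abs_of_neg (by linarith)
        have hlt : |s| / 2 ≤ ‖ξ‖ := by rw [habs]; linarith
        have hspos : (0 : ℝ) < |s| := by positivity
        have h1 := paired_core n hn s ξ hξ
        rw [if_pos hs] at h1
        have hb : (-((n : ℝ) - 1) / 2) ≤ 0 := by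
          have : (3 : ℝ) ≤ (n : ℝ) := by exact_mod_cast hn
          linarith
        have h2' : ‖ξ‖ ^ (-((n : ℝ) - 1) / 2) ≤ (|s| / 2) ^ (-((n : ℝ) - 1) / 2) :=
          Real.rpow_le_rpow_of_nonpos (by positivity) hlt hb
        have h3 : pairedSymbolMink n s ξ
            ≤ 2 ^ (((n : ℝ) - 3) / 2) * (-s) ^ (((n : ℝ) - 3) / 2)
              * (|s| / 2) ^ (-((n : ℝ) - 1) / 2) :=
          h1.trans (mul_le_mul_of_nonneg_left h2' (by positivity))
        have heq : 2 ^ (((n : ℝ) - 3) / 2) * (-s) ^ (((n : ℝ) - 3) / 2)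
              * (|s| / 2) ^ (-((n : ℝ) - 1) / 2)
            = 2 ^ ((n : ℝ) - 2) * |s|⁻¹ := by
          rw [← habs, Real.div_rpow hspos.le (by norm_num : (0:ℝ) ≤ 2)]
          have e1 : (2:ℝ) ^ (((n:ℝ)-3)/2) / 2 ^ (-((n:ℝ)-1)/2) = 2 ^ ((n:ℝ)-2) := by
            rw [← Real.rpow_sub two_pos,
              show (((n:ℝ)-3)/2 - (-((n:ℝ)-1)/2)) = (n:ℝ)-2 by ring]
          have e2 : |s| ^ (((n:ℝ)-3)/2) * |s| ^ (-((n:ℝ)-1)/2) = |s|⁻¹ := by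
            rw [← Real.rpow_add hspos,
              show (((n:ℝ)-3)/2 + (-((n:ℝ)-1)/2)) = -1 by ring, Real.rpow_neg_one]
          calc 2 ^ (((n:ℝ)-3)/2) * |s| ^ (((n:ℝ)-3)/2)
                * (|s| ^ (-((n:ℝ)-1)/2) / 2 ^ (-((n:ℝ)-1)/2))
              = (2 ^ (((n:ℝ)-3)/2) / 2 ^ (-((n:ℝ)-1)/2))
                * (|s| ^ (((n:ℝ)-3)/2) * |s| ^ (-((n:ℝ)-1)/2)) := by ring
            _ = 2 ^ ((n:ℝ)-2) * |s|⁻¹ := by rw [e1, e2]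
        rw [heq] at h3
        exact h3
      · have : pairedSymbolMink n s ξ = 0 := by
          unfold pairedSymbolMink; rw [if_neg h2]; simp
        rw [this]; positivity
    · have : pairedSymbolMink n s ξ = 0 := by
        unfold pairedSymbolMink; rw [if_neg hs]; simp
      rw [this]; positivity
  · intro C₀ _
    refine ⟨2 ^ (((n : ℝ) - 3) / 2), by positivity, ?_⟩
    intro s ξ hξ hs _ _
    have h1 := paired_core n hn s ξ hξ
    refine h1.trans ?_
    have hind : (if 0 < -s then (-s) ^ (((n : ℝ) - 3) / 2) else 0)
        ≤ |s| ^ (((n : ℝ) - 3) / 2) := by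
      split_ifs with h
      · exact Real.rpow_le_rpow h.le (neg_le_abs s) ha
      · positivity
    calc 2 ^ (((n : ℝ) - 3) / 2) * (if 0 < -s then (-s) ^ (((n : ℝ) - 3) / 2) else 0)
          * ‖ξ‖ ^ (-((n : ℝ) - 1) / 2)
        ≤ 2 ^ (((n : ℝ) - 3) / 2) * |s| ^ (((n : ℝ) - 3) / 2)
          * ‖ξ‖ ^ (-((n : ℝ) - 1) / 2) := by
          apply mul_le_mul_of_nonneg_right (mul_le_mul_of_nonneg_left hind (by positivity))
            (Real.rpow_nonneg (norm_nonneg ξ) _)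
      _ = 2 ^ (((n : ℝ) - 3) / 2) * ‖ξ‖ ^ (-((n : ℝ) - 1) / 2)
          * |s| ^ (((n : ℝ) - 3) / 2) := by ring
end

section
/- Let n ≥ 2 and let f be a Schwartz function on ℝ^{1+n} such that Lf(z,θ) = 0 for all z ∈ ℝ^n and θ ∈ S^{n-1}. Then f̂(τ,ξ) = 0 for every (τ,ξ) with |τ| ≤ |ξ| (in particular f̂ vanishes on the closed space-like cone, including the light cone τ² = |ξ|²). (This is the exact, Fourier-support counterpart of the statement that the light ray transform determines space-like singularities.) -/
/-!
Given `|τ| ≤ |ξ|`, pick a unit vector `θ` with `θ · ξ = -τ`; it exists because for `n ≥ 2` the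
unit sphere is connected and `θ ↦ θ · ξ` takes the values `±|ξ|` on it. Along the light ray
`s ↦ (s, z + sθ)` the phase `tτ + x · ξ` is then constantly `z · ξ`, so after the
measure-preserving shear `(s, z) ↦ (s, z + sθ)` Fubini gives
`f̂(τ, ξ) = ∫ e^{-i z · ξ} Lf(z, θ) dz = 0`.
-/

open MeasureTheory

theorem exists_norm_eq_one_inner_eq {E : Type*} [NormedAddCommGroup E] [InnerProductSpace ℝ E]
    (hE : 1 < Module.rank ℝ E) {ξ : E} {c : ℝ} (hc : |c| ≤ ‖ξ‖) :
    ∃ θ : E, ‖θ‖ = 1 ∧ inner ℝ θ ξ = c := by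
  have : Nontrivial E := rank_pos_iff_nontrivial.mp (zero_lt_one.trans hE)
  obtain ⟨u, hu, huξ⟩ : ∃ u : E, ‖u‖ = 1 ∧ inner ℝ u ξ = ‖ξ‖ := by
    rcases eq_or_ne ξ 0 with rfl | hξ
    · obtain ⟨u, hu⟩ := exists_norm_eq E zero_le_one
      exact ⟨u, hu, by simp⟩
    · refine ⟨‖ξ‖⁻¹ • ξ, norm_smul_inv_norm hξ, ?_⟩
      rw [real_inner_smul_left, real_inner_self_eq_norm_sq]
      field_simp
  have hc' : c ∈ Set.Icc (inner ℝ (-u) ξ) (inner ℝ u ξ) := by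
    rw [inner_neg_left, huξ]
    exact abs_le.mp hc
  obtain ⟨θ, hθ, hθξ⟩ := (isPreconnected_sphere hE 0 1).intermediate_value
    (by simpa using hu) (by simpa using hu) (continuous_id.inner continuous_const).continuousOn hc'
  exact ⟨θ, by simpa using hθ, hθξ⟩

theorem integral_prod_eq_integral_integral_shear {α E F : Type*} [MeasurableSpace α]
    [MeasurableSpace E] [AddGroup E] [MeasurableAdd₂ E] [NormedAddCommGroup F] [NormedSpace ℝ F]
    {μ : Measure α} {ν : Measure E} [SFinite μ] [SFinite ν] [ν.IsAddRightInvariant]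
    {h : α → E} (hh : Measurable h) {g : α × E → F} (hg : Integrable g (μ.prod ν)) :
    ∫ w, g w ∂μ.prod ν = ∫ z, ∫ s, g (s, z + h s) ∂μ ∂ν := by
  have hshear : MeasurePreserving (fun p : α × E => (p.1, p.2 + h p.1)) (μ.prod ν) (μ.prod ν) :=
    (MeasurePreserving.id μ).skew_product (by fun_prop)
      (ae_of_all _ fun s => map_add_right_eq_self ν (h s))
  have hgm := hg.aestronglyMeasurable
  rw [← hshear.map_eq] at hgm
  conv_lhs => rw [← hshear.map_eq, integral_map hshear.measurable.aemeasurable hgm]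
  exact integral_prod_symm _ (hshear.integrable_comp_of_integrable hg)

/-- If `f` is Schwartz on `ℝ^{1+n}` and its light ray transform vanishes
identically, then the Fourier transform `f̂(τ,ξ) = ∫ e^{-i(tτ + x·ξ)} f dt dx` vanishes at
every `(τ,ξ)` with `|τ| ≤ |ξ|`, i.e. on the closed space-like cone including the light
cone: the light ray transform determines space-like singularities. -/
theorem light_ray_vanishes_implies_spacelike_fourier_vanishes
    (n : ℕ) (hn : 2 ≤ n)
    (f : SchwartzMap (ℝ × EuclideanSpace ℝ (Fin n)) ℂ)
    (hL : ∀ (z θ : EuclideanSpace ℝ (Fin n)), ‖θ‖ = 1 →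
      (∫ s : ℝ, f (s, z + s • θ)) = 0) :
    ∀ (τ : ℝ) (ξ : EuclideanSpace ℝ (Fin n)), |τ| ≤ ‖ξ‖ →
      (∫ w : ℝ × EuclideanSpace ℝ (Fin n),
          Complex.exp (-(Complex.I * ((w.1 * τ + inner ℝ w.2 ξ : ℝ) : ℂ))) * f w) = 0 := by
  intro τ ξ hτξ
  obtain ⟨θ, hθ, hθξ⟩ := exists_norm_eq_one_inner_eq (E := EuclideanSpace ℝ (Fin n)) (c := -τ)
    (by rw [← Module.finrank_eq_rank, finrank_euclideanSpace_fin]; exact_mod_cast hn)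
    (by rwa [abs_neg])
  have hphase (s : ℝ) (z : EuclideanSpace ℝ (Fin n)) :
      s * τ + inner ℝ (z + s • θ) ξ = inner ℝ z ξ := by
    rw [inner_add_left, real_inner_smul_left, hθξ]
    ring
  have hint : Integrable (fun w : ℝ × EuclideanSpace ℝ (Fin n) =>
      Complex.exp (-(Complex.I * ((w.1 * τ + inner ℝ w.2 ξ : ℝ) : ℂ))) * f w)
      (volume.prod volume) :=
    (f.integrable (μ := volume.prod volume)).bdd_mul (c := 1)
      (Continuous.aestronglyMeasurable (by fun_prop))
      (ae_of_all _ fun w => by simp [Complex.norm_exp])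
  rw [Measure.volume_eq_prod,
    integral_prod_eq_integral_integral_shear (h := fun s => s • θ) (by fun_prop) hint]
  simp only [hphase, integral_const_mul, hL _ θ hθ, mul_zero, integral_zero]
end
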